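/- Let $n \le q \le p < \infty$, let $h \in L_p(\mathbb{R}^n)$ be nonnegative, and let $d = d_q(\cdot,\cdot : h)$ be the geodesic distance associated to $\delta_q(x,y:h) = \|x-y\|\sup_{Q\ni x,y}(|Q|^{-1}\int_Q h^q)^{1/q}$. For $x \in \mathbb{R}^n$ define $v_x(t) = t \sup_{s \ge t} (|Q(x,s)|^{-1} \int_{Q(x,s)} h^q)^{1/q}$ for $t \ge 0$, where $Q(x,s)$ is the cube centered at $x$ with side $2s$. Then $\frac{1}{2} d(x,y) \le v_x(\|x-y\|) \le 16\, d(x,y)$ for all $x,y \in \mathbb{R}^n$. -/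

import Mathlib

open MeasureTheory ENNReal Metric

noncomputable def cubeSup (n : ℕ) (q : ℝ) (w : (Fin n → ℝ) → ℝ≥0∞) (x y : Fin n → ℝ) : ℝ≥0∞ :=
  ⨆ (c : Fin n → ℝ) (r : ℝ) (_ : 0 < r) (_ : x ∈ closedBall c r) (_ : y ∈ closedBall c r),
    ((∫⁻ u in closedBall c r, w u) / volume (closedBall c r)) ^ (1 / q)

noncomputable def deltaQ (n : ℕ) (q : ℝ) (w : (Fin n → ℝ) → ℝ≥0∞) (x y : Fin n → ℝ) : ℝ≥0∞ :=
  ENNReal.ofReal ‖x - y‖ * cubeSup n q w x y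

noncomputable def geoQ (n : ℕ) (q : ℝ) (w : (Fin n → ℝ) → ℝ≥0∞) (x y : Fin n → ℝ) : ℝ≥0∞ :=
  ⨅ (m : ℕ) (z : ℕ → Fin n → ℝ) (_ : z 0 = x) (_ : z m = y),
    ∑ i ∈ Finset.range m, deltaQ n q w (z i) (z (i + 1))

/-- `v_x(t) = t · sup_{s ≥ t} (|Q(x,s)|⁻¹ ∫_{Q(x,s)} w)^{1/q}` where `Q(x,s)` is the cube
centered at `x` with side `2s`, i.e. the closed sup-norm ball of radius `s`. -/
noncomputable def vfun (n : ℕ) (q : ℝ) (w : (Fin n → ℝ) → ℝ≥0∞) (x : Fin n → ℝ) (t : ℝ) :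
    ℝ≥0∞ :=
  ENNReal.ofReal t * ⨆ (s : ℝ) (_ : t ≤ s),
    ((∫⁻ u in closedBall x s, w u) / volume (closedBall x s)) ^ (1 / q)

/-! Write `A(c, r) = (|Q(c, r)|⁻¹ ∫_{Q(c, r)} w) ^ (1 / q)`. Since `n ≤ q`, the quantity
`r · A(c, r)` does not decrease when `Q(c, r)` is replaced by a cube `Q(c', R) ⊇ Q(c, r)`: the
volume ratio only enters as `(R / r) ^ (n / q) ≤ R / r`. Enlarging every cube `Q(c, r) ∋ x, y`
to `Q(x, 2r)` bounds the one-step chain, hence `d(x, y) ≤ 2 v_x(‖x - y‖)`. Conversely, fix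
`s ≥ ‖x - y‖` and a chain from `x` to `y`, and follow it until it first leaves `Q(x, s)`: the
steps up to that point, each truncated at length `s`, still add up to at least `‖x - y‖`, and
each such truncated step `a → b` pays at most `3 δ(a, b)` against `A(x, s)`. -/

noncomputable def cubeAvg (n : ℕ) (q : ℝ) (w : (Fin n → ℝ) → ℝ≥0∞) (c : Fin n → ℝ) (r : ℝ) :
    ℝ≥0∞ :=
  ((∫⁻ u in closedBall c r, w u) / volume (closedBall c r)) ^ (1 / q)

lemma min_sum_le_sum_min {ι : Type*} (t : Finset ι) {f : ι → ℝ} (hf : ∀ i ∈ t, 0 ≤ f i)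
    {s : ℝ} (hs : 0 ≤ s) : min (∑ i ∈ t, f i) s ≤ ∑ i ∈ t, min (f i) s :=
  Finset.le_sum_of_subadditive_on_pred (fun a => min a s) (0 ≤ ·) (min_le_left _ _)
    (fun a b ha hb => by simp only [min_def]; split_ifs <;> linarith)
    (fun _ _ => add_nonneg) f hf

lemma exists_prefix_mem_closedBall {α : Type*} [PseudoMetricSpace α] {x y : α} {s : ℝ}
    (hxy : dist x y ≤ s) {m : ℕ} {z : ℕ → α} (hm : z m = y) :
    ∃ k ≤ m, (∀ i < k, z i ∈ closedBall x s) ∧ dist x y ≤ min (dist x (z k)) s := by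
  classical
  have hex : ∃ k, k = m ∨ z k ∉ closedBall x s := ⟨m, Or.inl rfl⟩
  refine ⟨Nat.find hex, Nat.find_min' hex (Or.inl rfl), fun i hi => ?_, ?_⟩
  · exact not_not.1 fun h => Nat.find_min hex hi (Or.inr h)
  · rcases Nat.find_spec hex with hk | hk
    · rw [hk, hm]
      exact le_min le_rfl hxy
    · rw [mem_closedBall, not_le, dist_comm] at hk
      exact le_min (hxy.trans hk.le) hxy

section

variable {n : ℕ} {q : ℝ} (w : (Fin n → ℝ) → ℝ≥0∞)

lemma volume_closedBall_eq_pow_mul (c c' : Fin n → ℝ) {r R : ℝ} (hr : 0 < r) (hrR : r ≤ R) :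
    volume (closedBall c' R) = ENNReal.ofReal (R / r) ^ n * volume (closedBall c r) := by
  rw [Real.volume_pi_closedBall _ (hr.le.trans hrR), Real.volume_pi_closedBall _ hr.le,
    Fintype.card_fin, ← ENNReal.ofReal_pow (div_nonneg (hr.le.trans hrR) hr.le),
    ← ENNReal.ofReal_mul (pow_nonneg (div_nonneg (hr.le.trans hrR) hr.le) n), ← mul_pow]
  congr 2
  field_simp

lemma ofReal_mul_cubeAvg_le_of_subset (hq : (n : ℝ) ≤ q) (hq0 : 0 < q) {c c' : Fin n → ℝ}
    {r R : ℝ} (hr : 0 < r) (hrR : r ≤ R) (hsub : closedBall c r ⊆ closedBall c' R) :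
    ENNReal.ofReal r * cubeAvg n q w c r ≤ ENNReal.ofReal R * cubeAvg n q w c' R := by
  set ρ := ENNReal.ofReal (R / r)
  have hρ : 1 ≤ ρ := ENNReal.one_le_ofReal.2 ((one_le_div hr).2 hrR)
  have hρn : ρ ^ n ≠ 0 := pow_ne_zero _ (zero_lt_one.trans_le hρ).ne'
  have havg : (∫⁻ u in closedBall c r, w u) / volume (closedBall c r) ≤
      ρ ^ n * ((∫⁻ u in closedBall c' R, w u) / volume (closedBall c' R)) := by
    rw [volume_closedBall_eq_pow_mul c c' hr hrR,
      ← ENNReal.mul_div_mul_left _ _ hρn (by finiteness), mul_div_assoc]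
    gcongr
  have hexp : (ρ ^ n) ^ (1 / q) ≤ ρ := by
    rw [← ENNReal.rpow_natCast, ← ENNReal.rpow_mul, mul_one_div]
    conv_rhs => rw [← ENNReal.rpow_one ρ]
    exact ENNReal.rpow_le_rpow_of_exponent_le hρ (div_le_one_of_le₀ hq hq0.le)
  calc ENNReal.ofReal r * cubeAvg n q w c r
      ≤ ENNReal.ofReal r * ((ρ ^ n) ^ (1 / q) * cubeAvg n q w c' R) := by
        rw [cubeAvg, cubeAvg, ← ENNReal.mul_rpow_of_nonneg _ _ (by positivity)]
        gcongr
    _ ≤ ENNReal.ofReal r * (ρ * cubeAvg n q w c' R) := by gcongr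
    _ = ENNReal.ofReal R * cubeAvg n q w c' R := by
        rw [← mul_assoc, ← ENNReal.ofReal_mul hr.le, mul_div_cancel₀ _ hr.ne']

lemma cubeAvg_le_two_mul_of_subset (hq : (n : ℝ) ≤ q) (hq0 : 0 < q) {c c' : Fin n → ℝ}
    {r : ℝ} (hr : 0 < r) (hsub : closedBall c r ⊆ closedBall c' (2 * r)) :
    cubeAvg n q w c r ≤ 2 * cubeAvg n q w c' (2 * r) := by
  have h := ofReal_mul_cubeAvg_le_of_subset w hq hq0 hr (by linarith) hsub
  rw [ENNReal.ofReal_mul zero_le_two, ENNReal.ofReal_ofNat, mul_assoc, mul_left_comm] at h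
  exact (ENNReal.mul_le_mul_iff_right (by simpa using hr) ENNReal.ofReal_ne_top).1 h

lemma cubeAvg_le_cubeSup {c a b : Fin n → ℝ} {r : ℝ} (hr : 0 < r) (ha : a ∈ closedBall c r)
    (hb : b ∈ closedBall c r) : cubeAvg n q w c r ≤ cubeSup n q w a b :=
  le_iSup_of_le c <| le_iSup_of_le r <| le_iSup_of_le hr <| le_iSup_of_le ha <|
    le_iSup_of_le hb le_rfl

lemma geoQ_le_deltaQ (x y : Fin n → ℝ) : geoQ n q w x y ≤ deltaQ n q w x y := by
  refine iInf_le_of_le 1 <| iInf_le_of_le (fun j => if j = 0 then x else y) <|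
    iInf_le_of_le (if_pos rfl) <| iInf_le_of_le (if_neg one_ne_zero) ?_
  simp

@[simp]
lemma geoQ_self (x : Fin n → ℝ) : geoQ n q w x x = 0 :=
  nonpos_iff_eq_zero.1 <| (geoQ_le_deltaQ w x x).trans_eq (by simp [deltaQ])

lemma deltaQ_le_two_mul_vfun (hq : (n : ℝ) ≤ q) (hq0 : 0 < q) (x y : Fin n → ℝ) :
    deltaQ n q w x y ≤ 2 * vfun n q w x ‖x - y‖ := by
  rw [deltaQ, vfun, mul_left_comm]
  gcongr
  refine iSup_le fun c => iSup_le fun r => iSup_le fun hr => iSup_le fun hx => iSup_le fun hy => ?_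
  rw [mem_closedBall] at hx hy
  have hsub : closedBall c r ⊆ closedBall x (2 * r) :=
    closedBall_subset_closedBall' (by rw [dist_comm]; linarith)
  have hxy : ‖x - y‖ ≤ 2 * r := by
    rw [← dist_eq_norm]
    linarith [dist_triangle_right x y c]
  calc cubeAvg n q w c r ≤ 2 * cubeAvg n q w x (2 * r) :=
        cubeAvg_le_two_mul_of_subset w hq hq0 hr hsub
    _ ≤ _ := by gcongr; exact le_iSup₂_of_le (2 * r) hxy le_rfl

lemma min_dist_mul_cubeAvg_le_deltaQ (hq : (n : ℝ) ≤ q) (hq0 : 0 < q) {x a b : Fin n → ℝ}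
    {s : ℝ} (hs : 0 < s) (ha : a ∈ closedBall x s) :
    ENNReal.ofReal (min (dist a b) s) * cubeAvg n q w x s ≤ 3 * deltaQ n q w a b := by
  rw [deltaQ, ← dist_eq_norm]
  rw [mem_closedBall] at ha
  rcases le_or_gt (dist a b) s with hab | hab
  · -- a short step stays in the cube `Q(x, 2s)`
    have hb : b ∈ closedBall x (2 * s) := mem_closedBall.2 (by
      linarith [dist_triangle_left b x a])
    calc ENNReal.ofReal (min (dist a b) s) * cubeAvg n q w x s
        ≤ ENNReal.ofReal (dist a b) * (2 * cubeAvg n q w x (2 * s)) := by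
          gcongr
          · exact min_le_left _ _
          · exact cubeAvg_le_two_mul_of_subset w hq hq0 hs
              (closedBall_subset_closedBall (by linarith))
      _ ≤ 2 * (ENNReal.ofReal (dist a b) * cubeSup n q w a b) := by
          rw [mul_left_comm]
          gcongr
          exact cubeAvg_le_cubeSup w (by linarith) (mem_closedBall.2 (by linarith)) hb
      _ ≤ 3 * (ENNReal.ofReal (dist a b) * cubeSup n q w a b) := by gcongr; norm_num
  · -- a long step of length `d > s`: `Q(x, s) ⊆ Q(a, d + 2s)` and `d + 2s ≤ 3d`
    set d := dist a b
    have hsub : closedBall x s ⊆ closedBall a (d + 2 * s) :=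
      closedBall_subset_closedBall' (by rw [dist_comm]; linarith)
    calc ENNReal.ofReal (min d s) * cubeAvg n q w x s
        = ENNReal.ofReal s * cubeAvg n q w x s := by rw [min_eq_right hab.le]
      _ ≤ ENNReal.ofReal (d + 2 * s) * cubeAvg n q w a (d + 2 * s) :=
          ofReal_mul_cubeAvg_le_of_subset w hq hq0 hs (by linarith) hsub
      _ ≤ ENNReal.ofReal (3 * d) * cubeSup n q w a b := by
          gcongr
          · linarith
          · exact cubeAvg_le_cubeSup w (by linarith) (mem_closedBall_self (by linarith))
              (mem_closedBall'.2 (by linarith))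
      _ = 3 * (ENNReal.ofReal d * cubeSup n q w a b) := by
          rw [ENNReal.ofReal_mul zero_le_three, ENNReal.ofReal_ofNat, mul_assoc]

lemma ofReal_dist_mul_cubeAvg_le_chain (hq : (n : ℝ) ≤ q) (hq0 : 0 < q) {x y : Fin n → ℝ}
    {s : ℝ} (hs : 0 < s) (hxy : dist x y ≤ s) {m : ℕ} {z : ℕ → Fin n → ℝ} (h0 : z 0 = x)
    (hm : z m = y) :
    ENNReal.ofReal (dist x y) * cubeAvg n q w x s ≤
      3 * ∑ i ∈ Finset.range m, deltaQ n q w (z i) (z (i + 1)) := by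
  obtain ⟨k, hkm, hmem, hk⟩ := exists_prefix_mem_closedBall hxy hm
  have htrunc : dist x y ≤ ∑ i ∈ Finset.range k, min (dist (z i) (z (i + 1))) s := by
    refine hk.trans ((min_le_min_right s ?_).trans
      (min_sum_le_sum_min _ (fun _ _ => dist_nonneg) hs.le))
    simpa only [h0] using dist_le_range_sum_dist z k
  calc ENNReal.ofReal (dist x y) * cubeAvg n q w x s
      ≤ ∑ i ∈ Finset.range k,
          ENNReal.ofReal (min (dist (z i) (z (i + 1))) s) * cubeAvg n q w x s := by
        rw [← Finset.sum_mul, ← ENNReal.ofReal_sum_of_nonneg fun _ _ => le_min dist_nonneg hs.le]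
        gcongr
    _ ≤ ∑ i ∈ Finset.range k, 3 * deltaQ n q w (z i) (z (i + 1)) :=
        Finset.sum_le_sum fun i hi =>
          min_dist_mul_cubeAvg_le_deltaQ w hq hq0 hs (hmem i (Finset.mem_range.1 hi))
    _ ≤ 3 * ∑ i ∈ Finset.range m, deltaQ n q w (z i) (z (i + 1)) := by
        rw [← Finset.mul_sum]
        gcongr

lemma vfun_le_three_mul_geoQ (hq : (n : ℝ) ≤ q) (hq0 : 0 < q) (x y : Fin n → ℝ) :
    vfun n q w x ‖x - y‖ ≤ 3 * geoQ n q w x y := by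
  rcases (norm_nonneg (x - y)).eq_or_lt with hxy | hxy
  · simp [vfun, ← hxy]
  rw [mul_comm, ← ENNReal.div_le_iff (by norm_num) (by norm_num)]
  refine le_iInf fun m => le_iInf fun z => le_iInf fun h0 => le_iInf fun hm => ?_
  rw [ENNReal.div_le_iff (by norm_num) (by norm_num), mul_comm, vfun, ENNReal.mul_iSup]
  refine iSup_le fun s => ?_
  rw [ENNReal.mul_iSup]
  refine iSup_le fun hs => ?_
  rw [← dist_eq_norm] at hs ⊢
  exact ofReal_dist_mul_cubeAvg_le_chain w hq hq0 (hxy.trans_le hs) hs h0 hm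

end

theorem stmt_2_general (n : ℕ) (q : ℝ) (hq : (n : ℝ) ≤ q)
    (h : (Fin n → ℝ) → ℝ)
    (x y : Fin n → ℝ) :
    geoQ n q (fun u => ENNReal.ofReal (h u) ^ q) x y / 2 ≤
        vfun n q (fun u => ENNReal.ofReal (h u) ^ q) x ‖x - y‖ ∧
      vfun n q (fun u => ENNReal.ofReal (h u) ^ q) x ‖x - y‖ ≤
        16 * geoQ n q (fun u => ENNReal.ofReal (h u) ^ q) x y := by
  set w : (Fin n → ℝ) → ℝ≥0∞ := fun u => ENNReal.ofReal (h u) ^ q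
  rcases eq_or_ne x y with rfl | hxy
  · simp [vfun]
  have hn : 0 < n := Nat.pos_of_ne_zero fun hn => hxy (by subst hn; exact Subsingleton.elim x y)
  have hq0 : 0 < q := lt_of_lt_of_le (by exact_mod_cast hn) hq
  refine ⟨ENNReal.div_le_of_le_mul' ?_, ?_⟩
  · exact (geoQ_le_deltaQ w x y).trans (deltaQ_le_two_mul_vfun w hq hq0 x y)
  · exact (vfun_le_three_mul_geoQ w hq hq0 x y).trans (by gcongr; norm_num)

theorem stmt_2 (n : ℕ) (q p : ℝ) (hq : (n : ℝ) ≤ q) (hqp : q ≤ p)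
    (h : (Fin n → ℝ) → ℝ) (hh : ∀ u, 0 ≤ h u)
    (hmem : MemLp h (ENNReal.ofReal p) volume)
    (x y : Fin n → ℝ) :
    geoQ n q (fun u => ENNReal.ofReal (h u) ^ q) x y / 2 ≤
        vfun n q (fun u => ENNReal.ofReal (h u) ^ q) x ‖x - y‖ ∧
      vfun n q (fun u => ENNReal.ofReal (h u) ^ q) x ‖x - y‖ ≤
        16 * geoQ n q (fun u => ENNReal.ofReal (h u) ^ q) x y :=
  stmt_2_general n q hq h x y
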